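/- Let O be a hermitian circulant operator on ℂ²⊗ℂ² in real representation with diagonal entries w₁₁, w₁₂, w₂₁, w₂₂ and anti-diagonal u₁, u₂ ≥ 0, and suppose w₁₁ = w₂₁ and w₁₂ = w₂₂ (i.e., A₁(y) = A₂(y) for all y). Then the maximum of the quadratic form over real product unit vectors is attained at x = (1/√2, 1/√2), and equals max over unit y ∈ ℝ²_{≥0} of Σ_k w₁k y_k² + (u₁+u₂) y₁ y₂ = (w₁₁+w₁₂)/2 + √(((w₁₁−w₁₂)/2)² + ((u₁+u₂)/2)²). -/

import Mathlib

open Matrix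

/-- Kronecker product vector of `x, y ∈ ℝ²` in the ordered basis
`(e₁⊗f₁, e₁⊗f₂, e₂⊗f₁, e₂⊗f₂)`. -/
def kvecR (x y : Fin 2 → ℝ) : Fin 4 → ℝ := ![x 0 * y 0, x 0 * y 1, x 1 * y 0, x 1 * y 1]

/-! With `w₂₁ = w₁₁` and `w₂₂ = w₁₂`, the form at `x ⊗ y` collapses, for unit `x`, to the binary
form `w₁₁ y₁² + w₁₂ y₂² + 2 (c·2x₁x₂) y₁ y₂` with `c = (u₁ + u₂)/2`. The maximum of a binary form
`a t² + b s² + 2c' t s` on the unit circle is the top eigenvalue of `[[a, c'], [c', b]]`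
(Cauchy–Schwarz against the unit vector `(t² − s², 2ts)`), and it depends on `c'` only through
`c'²`; since `|2x₁x₂| ≤ 1` it is largest at `x = (1/√2, 1/√2)`. For `c ≥ 0` the top eigenvector
can be taken in the closed positive quadrant. -/

noncomputable def binaryForm (a b c t s : ℝ) : ℝ := a * t ^ 2 + b * s ^ 2 + 2 * c * t * s

noncomputable def binaryFormTopEig (a b c : ℝ) : ℝ := (a + b) / 2 + √(((a - b) / 2) ^ 2 + c ^ 2)

lemma add_mul_le_sqrt_of_sq_add_sq_eq_one {p q X Y : ℝ} (h : X ^ 2 + Y ^ 2 = 1) :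
    p * X + q * Y ≤ √(p ^ 2 + q ^ 2) :=
  (le_abs_self _).trans <| Real.abs_le_sqrt <| by nlinarith [sq_nonneg (p * Y - q * X)]

lemma binaryForm_eq_of_sq_add_sq_eq_one {a b c t s : ℝ} (h : t ^ 2 + s ^ 2 = 1) :
    binaryForm a b c t s = (a + b) / 2 + ((a - b) / 2 * (t ^ 2 - s ^ 2) + c * (2 * t * s)) := by
  unfold binaryForm
  linear_combination (a + b) / 2 * h

lemma binaryForm_le_binaryFormTopEig (a b c : ℝ) {t s : ℝ} (h : t ^ 2 + s ^ 2 = 1) :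
    binaryForm a b c t s ≤ binaryFormTopEig a b c := by
  rw [binaryForm_eq_of_sq_add_sq_eq_one h, binaryFormTopEig]
  gcongr
  exact add_mul_le_sqrt_of_sq_add_sq_eq_one (by linear_combination (t ^ 2 + s ^ 2 + 1) * h)

lemma binaryFormTopEig_le_of_sq_le (a b : ℝ) {c c' : ℝ} (h : c' ^ 2 ≤ c ^ 2) :
    binaryFormTopEig a b c' ≤ binaryFormTopEig a b c := by
  unfold binaryFormTopEig
  gcongr

lemma binaryForm_cos_sin (a b c θ : ℝ) :
    binaryForm a b c (Real.cos θ) (Real.sin θ) =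
      (a + b) / 2 + ((a - b) / 2 * Real.cos (2 * θ) + c * Real.sin (2 * θ)) := by
  rw [binaryForm_eq_of_sq_add_sq_eq_one (Real.cos_sq_add_sin_sq θ), Real.cos_two_mul',
    Real.sin_two_mul]
  ring

/-- The rotation angle that diagonalises the form is half the argument of `(a - b)/2 + c i`. -/
lemma exists_nonneg_binaryForm_eq_binaryFormTopEig (a b : ℝ) {c : ℝ} (hc : 0 ≤ c) :
    ∃ t s : ℝ, 0 ≤ t ∧ 0 ≤ s ∧ t ^ 2 + s ^ 2 = 1 ∧
      binaryForm a b c t s = binaryFormTopEig a b c := by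
  set z : ℂ := ⟨(a - b) / 2, c⟩
  have hφ₀ : 0 ≤ z.arg := Complex.arg_nonneg_iff.mpr hc
  have hφπ : z.arg ≤ Real.pi := Complex.arg_le_pi z
  refine ⟨Real.cos (z.arg / 2), Real.sin (z.arg / 2),
    Real.cos_nonneg_of_mem_Icc ⟨by linarith [Real.pi_pos], by linarith⟩,
    Real.sin_nonneg_of_nonneg_of_le_pi (by linarith) (by linarith [Real.pi_pos]),
    Real.cos_sq_add_sin_sq _, ?_⟩
  have hre : ‖z‖ * Real.cos z.arg = (a - b) / 2 := Complex.norm_mul_cos_arg z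
  have him : ‖z‖ * Real.sin z.arg = c := Complex.norm_mul_sin_arg z
  have hnorm : ‖z‖ = √(((a - b) / 2) ^ 2 + c ^ 2) := Complex.norm_eq_sqrt_sq_add_sq z
  rw [binaryForm_cos_sin, mul_div_cancel₀ _ two_ne_zero, binaryFormTopEig, ← hnorm]
  linear_combination -Real.cos z.arg * hre - Real.sin z.arg * him +
    ‖z‖ * Real.cos_sq_add_sin_sq z.arg

lemma binaryForm_half (a b e t s : ℝ) :
    binaryForm a b (e / 2) t s = a * t ^ 2 + b * s ^ 2 + e * t * s := by
  unfold binaryForm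
  ring

lemma kvecR_dotProduct_mulVec_balanced (w₁ w₂ u₁ u₂ : ℝ) {x : Fin 2 → ℝ}
    (hx : x 0 ^ 2 + x 1 ^ 2 = 1) (y : Fin 2 → ℝ) :
    kvecR x y ⬝ᵥ (!![w₁, 0, 0, u₁; 0, w₂, u₂, 0; 0, u₂, w₁, 0; u₁, 0, 0, w₂] *ᵥ kvecR x y) =
      binaryForm w₁ w₂ ((u₁ + u₂) / 2 * (2 * x 0 * x 1)) (y 0) (y 1) := by
  simp only [dotProduct, kvecR, mulVec, of_apply, cons_val', cons_val_fin_one, Fin.sum_univ_four,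
    cons_val_zero, cons_val_one, cons_val, zero_mul, add_zero, zero_add, binaryForm]
  linear_combination (w₁ * y 0 ^ 2 + w₂ * y 1 ^ 2) * hx

lemma sq_two_mul_le_one {p q : ℝ} (h : p ^ 2 + q ^ 2 = 1) : (2 * p * q) ^ 2 ≤ 1 := by
  nlinarith [sq_nonneg (p ^ 2 - q ^ 2)]

/-- For an X-shaped circulant matrix in real representation with `w₁₁ = w₂₁`, `w₁₂ = w₂₂`,
the maximum of the quadratic form over real product unit vectors is attained at
`x = (1/√2, 1/√2)` and equals
`max_{y ≥ 0, ‖y‖=1} (w₁₁y₁² + w₁₂y₂² + (u₁+u₂)y₁y₂)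
  = (w₁₁+w₁₂)/2 + √(((w₁₁−w₁₂)/2)² + ((u₁+u₂)/2)²)`. -/
theorem balanced_X_max (w11 w12 w21 w22 u1 u2 : ℝ) (hu1 : 0 ≤ u1) (hu2 : 0 ≤ u2)
    (h1 : w11 = w21) (h2 : w12 = w22) :
    let M : Matrix (Fin 4) (Fin 4) ℝ :=
      !![w11, 0, 0, u1; 0, w12, u2, 0; 0, u2, w21, 0; u1, 0, 0, w22]
    let γ : ℝ := (w11 + w12) / 2 +
      Real.sqrt (((w11 - w12) / 2) ^ 2 + ((u1 + u2) / 2) ^ 2)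
    IsGreatest {r : ℝ | ∃ x y : Fin 2 → ℝ,
        x 0 ^ 2 + x 1 ^ 2 = 1 ∧ y 0 ^ 2 + y 1 ^ 2 = 1 ∧
        kvecR x y ⬝ᵥ M.mulVec (kvecR x y) = r} γ ∧
    (∃ y : Fin 2 → ℝ, 0 ≤ y 0 ∧ 0 ≤ y 1 ∧ y 0 ^ 2 + y 1 ^ 2 = 1 ∧
      kvecR ![1 / Real.sqrt 2, 1 / Real.sqrt 2] y ⬝ᵥ
        M.mulVec (kvecR ![1 / Real.sqrt 2, 1 / Real.sqrt 2] y) = γ) ∧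
    IsGreatest {r : ℝ | ∃ y : Fin 2 → ℝ, 0 ≤ y 0 ∧ 0 ≤ y 1 ∧
        y 0 ^ 2 + y 1 ^ 2 = 1 ∧
        w11 * y 0 ^ 2 + w12 * y 1 ^ 2 + (u1 + u2) * y 0 * y 1 = r} γ := by
  subst h1 h2
  intro M γ
  have hγ : γ = binaryFormTopEig w11 w12 ((u1 + u2) / 2) := rfl
  obtain ⟨t, s, ht, hs, hts, hval⟩ :=
    exists_nonneg_binaryForm_eq_binaryFormTopEig w11 w12 (c := (u1 + u2) / 2) (by positivity)
  set x₀ : Fin 2 → ℝ := ![1 / √2, 1 / √2]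
  have hx₀ : x₀ 0 ^ 2 + x₀ 1 ^ 2 = 1 := by simp [x₀]; norm_num
  have hx₀_cross : 2 * x₀ 0 * x₀ 1 = 1 := by simp [x₀]; field_simp; norm_num
  have hattain : kvecR x₀ ![t, s] ⬝ᵥ M *ᵥ kvecR x₀ ![t, s] = γ := by
    rw [kvecR_dotProduct_mulVec_balanced _ _ _ _ hx₀, hx₀_cross, mul_one, hγ, ← hval]
    rfl
  refine ⟨⟨⟨x₀, ![t, s], hx₀, hts, hattain⟩, ?_⟩, ⟨![t, s], ht, hs, hts, hattain⟩,
    ⟨⟨![t, s], ht, hs, hts, by rw [← binaryForm_half]; exact hval.trans hγ.symm⟩, ?_⟩⟩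
  · rintro r ⟨x, y, hx, hy, rfl⟩
    rw [kvecR_dotProduct_mulVec_balanced _ _ _ _ hx, hγ]
    refine (binaryForm_le_binaryFormTopEig _ _ _ hy).trans (binaryFormTopEig_le_of_sq_le _ _ ?_)
    rw [mul_pow]
    exact mul_le_of_le_one_right (sq_nonneg _) (sq_two_mul_le_one hx)
  · rintro r ⟨y, -, -, hy, rfl⟩
    rw [← binaryForm_half]
    exact binaryForm_le_binaryFormTopEig _ _ _ hy
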